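/- arXiv:1812.08345 — 7 statements merged into one kernel-verified Lean document; each statement's English description precedes it below -/
import Mathlib

section
/- Let 0 → P → Q → R → 0 be a short exact sequence of finite-length k[N]-modules (equivalently, finite-dimensional vector spaces with compatible nilpotent operators), and let λ, μ, ν be the Jordan forms of N acting on P, Q, R respectively. Then μ ≥ λ + ν in dominance order, where λ + ν denotes the partition whose multiset of parts is the union of the parts of λ and ν. -/
/-- The nilpotent Jordan block of size `m`, as an operator on `Fin m → k`. -/
def Jfun (k : Type*) [Field k] (m : ℕ) (v : Fin m → k) : Fin m → k :=
  fun i => if h : (i : ℕ) + 1 < m then v ⟨(i : ℕ) + 1, h⟩ else 0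

/-- Extend a finite list of parts `lam : Fin s → ℕ` by zeros to a function `ℕ → ℕ`. -/
def extZ {s : ℕ} (lam : Fin s → ℕ) (i : ℕ) : ℕ := if h : i < s then lam ⟨i, h⟩ else 0

open Module LinearMap Finset

/-- Jordan block as a linear map. -/
def Jlin (k : Type*) [Field k] (m : ℕ) : (Fin m → k) →ₗ[k] (Fin m → k) where
  toFun := Jfun k m
  map_add' x y := by
    funext l; by_cases h : (l : ℕ) + 1 < m <;> simp [Jfun, h]
  map_smul' c x := by
    funext l; by_cases h : (l : ℕ) + 1 < m <;> simp [Jfun, h]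

lemma Jlin_pow (k : Type*) [Field k] (m j : ℕ) (v : Fin m → k) (l : Fin m) :
    ((Jlin k m) ^ j) v l = if h : (l : ℕ) + j < m then v ⟨(l : ℕ) + j, h⟩ else 0 := by
  induction j generalizing v with
  | zero => simp
  | succ n ih =>
      rw [pow_succ, Module.End.mul_apply, ih]
      by_cases h : (l : ℕ) + n < m
      · rw [dif_pos h]
        show Jfun k m v _ = _
        unfold Jfun
        by_cases h2 : (l : ℕ) + n + 1 < m
        · rw [dif_pos h2, dif_pos (by omega : (l : ℕ) + (n + 1) < m)]
          exact congrArg v (Fin.ext (by simp [Nat.add_assoc]))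
        · rw [dif_neg h2, dif_neg (by omega : ¬ ((l : ℕ) + (n + 1) < m))]
      · rw [dif_neg h, dif_neg (by omega : ¬ ((l : ℕ) + (n + 1) < m))]

/-- Direct sum of Jordan blocks as a linear map. -/
def Tlin (k : Type*) [Field k] {q : ℕ} (μ : Fin q → ℕ) :
    ((i : Fin q) → (Fin (μ i) → k)) →ₗ[k] ((i : Fin q) → (Fin (μ i) → k)) :=
  LinearMap.pi (fun i => (Jlin k (μ i)).comp (LinearMap.proj i))

lemma Tlin_pow (k : Type*) [Field k] {q : ℕ} (μ : Fin q → ℕ) (j : ℕ)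
    (x : (i : Fin q) → (Fin (μ i) → k)) (i : Fin q) :
    ((Tlin k μ) ^ j) x i = ((Jlin k (μ i)) ^ j) (x i) := by
  induction j generalizing x with
  | zero => simp
  | succ n ih =>
      rw [pow_succ, Module.End.mul_apply, ih, pow_succ, Module.End.mul_apply]
      rfl

/-- Extension-by-zero map. -/
def Phi (k : Type*) [Field k] {q : ℕ} (μ : Fin q → ℕ) (j : ℕ) :
    ((i : Fin q) → (Fin (μ i - j) → k)) →ₗ[k] ((i : Fin q) → (Fin (μ i) → k)) where
  toFun w i l := if h : (l : ℕ) < μ i - j then w i ⟨l, h⟩ else 0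
  map_add' x y := by funext i l; by_cases h : (l : ℕ) < μ i - j <;> simp [h]
  map_smul' c x := by funext i l; by_cases h : (l : ℕ) < μ i - j <;> simp [h]

lemma Phi_inj (k : Type*) [Field k] {q : ℕ} (μ : Fin q → ℕ) (j : ℕ) :
    Function.Injective (Phi k μ j) := by
  intro w1 w2 h
  funext i l
  have hl : (l : ℕ) < μ i := lt_of_lt_of_le l.isLt (Nat.sub_le _ _)
  have := congrFun (congrFun h i) ⟨(l : ℕ), hl⟩
  simpa [Phi, l.isLt] using this

lemma Phi_range (k : Type*) [Field k] {q : ℕ} (μ : Fin q → ℕ) (j : ℕ) :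
    LinearMap.range (Phi k μ j) = LinearMap.range ((Tlin k μ) ^ j) := by
  apply le_antisymm
  · rintro _ ⟨w, rfl⟩
    refine ⟨fun i l =>
      if h : j ≤ (l : ℕ) ∧ (l : ℕ) - j < μ i - j then w i ⟨(l : ℕ) - j, h.2⟩ else 0, ?_⟩
    funext i l
    rw [Tlin_pow, Jlin_pow]
    show _ = Phi k μ j w i l
    by_cases h : (l : ℕ) + j < μ i
    · rw [dif_pos h]
      have h1 : (l : ℕ) < μ i - j := by omega
      have h2 : j ≤ (l : ℕ) + j ∧ ((l : ℕ) + j) - j < μ i - j := by omega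
      show dite _ _ _ = _
      rw [dif_pos h2]
      show w i _ = dite _ _ _
      rw [dif_pos h1]
      exact congrArg (w i) (Fin.ext (by simp))
    · rw [dif_neg h]
      show (0 : k) = dite _ _ _
      rw [dif_neg (by omega : ¬ ((l : ℕ) < μ i - j))]
  · rintro _ ⟨x, rfl⟩
    refine ⟨fun i l =>
      ((Tlin k μ) ^ j) x i ⟨(l : ℕ), lt_of_lt_of_le l.isLt (Nat.sub_le _ _)⟩, ?_⟩
    funext i l
    show dite _ _ _ = _
    by_cases h : (l : ℕ) < μ i - j
    · rw [dif_pos h]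
    · rw [dif_neg h, Tlin_pow, Jlin_pow,
        dif_neg (by omega : ¬ ((l : ℕ) + j < μ i))]

lemma rank_Tlin_pow (k : Type*) [Field k] {q : ℕ} (μ : Fin q → ℕ) (j : ℕ) :
    finrank k (LinearMap.range ((Tlin k μ) ^ j)) = ∑ i, (μ i - j) := by
  rw [← Phi_range, LinearMap.finrank_range_of_inj (Phi_inj k μ j),
    Module.finrank_pi_fintype]
  simp

lemma comm_pow {k A B : Type*} [Field k] [AddCommGroup A] [Module k A]
    [AddCommGroup B] [Module k B] (f : A →ₗ[k] B) (N : A →ₗ[k] A) (M : B →ₗ[k] B)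
    (h : ∀ x, f (N x) = M (f x)) (j : ℕ) : ∀ x, f ((N ^ j) x) = (M ^ j) (f x) := by
  induction j with
  | zero => intro x; simp
  | succ n ih =>
      intro x
      rw [pow_succ, pow_succ, Module.End.mul_apply, Module.End.mul_apply, ih, h]

/-- Transport the rank computation through a linear equivalence. -/
lemma rank_conj {k V W : Type*} [Field k] [AddCommGroup V] [Module k V]
    [AddCommGroup W] [Module k W]
    (e : V ≃ₗ[k] W) (N : V →ₗ[k] V) (T : W →ₗ[k] W) (h : ∀ x, e (N x) = T (e x)) (j : ℕ) :
    finrank k (LinearMap.range (N ^ j)) = finrank k (LinearMap.range (T ^ j)) := by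
  have hj : ∀ x, e ((N ^ j) x) = (T ^ j) (e x) := comm_pow e.toLinearMap N T h j
  have hcomp : e.toLinearMap ∘ₗ (N ^ j) = (T ^ j) ∘ₗ e.toLinearMap := by
    ext x; exact hj x
  have hfin : LinearMap.range (T ^ j) =
      Submodule.map e.toLinearMap (LinearMap.range (N ^ j)) := by
    rw [← LinearMap.range_comp, hcomp,
      LinearMap.range_comp_of_range_eq_top _ (LinearMap.range_eq_top.mpr e.surjective)]
  rw [hfin, LinearEquiv.finrank_map_eq]

/-- Rank subadditivity for the exact sequence. -/
lemma rank_ineq {k P Q R : Type*} [Field k]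
    [AddCommGroup P] [Module k P] [AddCommGroup Q] [Module k Q]
    [AddCommGroup R] [Module k R] [Module.Finite k Q]
    (NP : P →ₗ[k] P) (NQ : Q →ₗ[k] Q) (NR : R →ₗ[k] R)
    (f : P →ₗ[k] Q) (g : Q →ₗ[k] R)
    (hf : Function.Injective f) (hg : Function.Surjective g)
    (hexact : LinearMap.range f = LinearMap.ker g)
    (hfN : ∀ x : P, f (NP x) = NQ (f x)) (hgN : ∀ x : Q, g (NQ x) = NR (g x)) (j : ℕ) :
    finrank k (LinearMap.range (NP ^ j)) + finrank k (LinearMap.range (NR ^ j)) ≤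
      finrank k (LinearMap.range (NQ ^ j)) := by
  have hfNj : ∀ x, f ((NP ^ j) x) = (NQ ^ j) (f x) := comm_pow f NP NQ hfN j
  have hgNj : ∀ x, g ((NQ ^ j) x) = (NR ^ j) (g x) := comm_pow g NQ NR hgN j
  set W := LinearMap.range (NQ ^ j) with hW
  let g' : W →ₗ[k] R := g ∘ₗ W.subtype
  have h1 : finrank k (LinearMap.range g') + finrank k (LinearMap.ker g') = finrank k W :=
    LinearMap.finrank_range_add_finrank_ker g'
  have hrg : LinearMap.range g' = LinearMap.range (NR ^ j) := by
    apply le_antisymm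
    · rintro _ ⟨⟨w, hw⟩, rfl⟩
      obtain ⟨x, rfl⟩ := hw
      exact ⟨g x, (hgNj x).symm⟩
    · rintro _ ⟨y, rfl⟩
      obtain ⟨x, rfl⟩ := hg y
      exact ⟨⟨(NQ ^ j) x, LinearMap.mem_range_self _ x⟩, hgNj x⟩
  have hkermap : (LinearMap.ker g').map W.subtype = W ⊓ LinearMap.ker g := by
    show (LinearMap.ker (g ∘ₗ W.subtype)).map W.subtype = _
    rw [LinearMap.ker_comp, Submodule.map_comap_subtype]
  have h2 : finrank k (LinearMap.range (NP ^ j)) ≤ finrank k (LinearMap.ker g') := by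
    have e1 : finrank k (LinearMap.ker g') = finrank k ((LinearMap.ker g').map W.subtype) :=
      LinearEquiv.finrank_eq (Submodule.equivSubtypeMap W (LinearMap.ker g'))
    have e2 : finrank k (LinearMap.range (NP ^ j)) =
        finrank k ((LinearMap.range (NP ^ j)).map f) :=
      LinearEquiv.finrank_eq (Submodule.equivMapOfInjective f hf _)
    rw [e1, e2, hkermap]
    apply Submodule.finrank_mono
    rintro _ ⟨y, ⟨x, rfl⟩, rfl⟩
    constructor
    · exact ⟨f x, (hfNj x).symm⟩
    · rw [← hexact]; exact ⟨(NP ^ j) x, rfl⟩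
  have h3 : finrank k (LinearMap.range (NR ^ j)) = finrank k (LinearMap.range g') := by
    rw [hrg]
  omega

lemma extZ_anti {s : ℕ} {lam : Fin s → ℕ} (h : Antitone lam) : Antitone (extZ lam) := by
  intro m n hmn
  unfold extZ
  split
  · split
    · exact h (Fin.mk_le_mk.mpr hmn)
    · omega
  · exact Nat.zero_le _

lemma extZ_coe {s : ℕ} (lam : Fin s → ℕ) (i : Fin s) : extZ lam (i : ℕ) = lam i := by
  simp [extZ, i.isLt]

lemma sumA {p : ℕ} (lam : Fin p → ℕ) (a j : ℕ) :
    ∑ i ∈ Finset.range a, extZ lam i ≤ a * j + ∑ i, (lam i - j) := by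
  have key : ∑ i ∈ Finset.range a, (extZ lam i - j) ≤ ∑ i, (lam i - j) := by
    calc ∑ i ∈ Finset.range a, (extZ lam i - j)
        ≤ ∑ i ∈ Finset.range (a + p), (extZ lam i - j) :=
          Finset.sum_le_sum_of_subset (Finset.range_subset_range.mpr (Nat.le_add_right a p))
      _ = ∑ i ∈ Finset.range p, (extZ lam i - j) := by
          refine (Finset.sum_subset (Finset.range_subset_range.mpr (Nat.le_add_left p a)) ?_).symm
          intro i hi hni
          have hip : ¬ i < p := by simpa using hni
          simp [extZ, hip]
      _ = ∑ i, (lam i - j) := by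
          rw [← Fin.sum_univ_eq_sum_range (fun i => extZ lam i - j) p]
          exact Finset.sum_congr rfl (fun i _ => by rw [extZ_coe])
  calc ∑ i ∈ Finset.range a, extZ lam i
      ≤ ∑ i ∈ Finset.range a, (j + (extZ lam i - j)) :=
        Finset.sum_le_sum (fun i _ => by omega)
    _ = a * j + ∑ i ∈ Finset.range a, (extZ lam i - j) := by
        rw [Finset.sum_add_distrib, Finset.sum_const, Finset.card_range, smul_eq_mul]
    _ ≤ a * j + ∑ i, (lam i - j) := by omega

lemma sumB {q : ℕ} (mu : Fin q → ℕ) (hQ : Antitone mu) (c : ℕ) :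
    c * extZ mu c + ∑ i, (mu i - extZ mu c) ≤ ∑ i ∈ Finset.range c, extZ mu i := by
  set j := extZ mu c with hj
  have hanti := extZ_anti hQ
  have key : ∑ i, (mu i - j) ≤ ∑ i ∈ Finset.range c, (extZ mu i - j) := by
    calc ∑ i, (mu i - j) = ∑ i ∈ Finset.range q, (extZ mu i - j) := by
          rw [← Fin.sum_univ_eq_sum_range (fun i => extZ mu i - j) q]
          exact Finset.sum_congr rfl (fun i _ => by rw [extZ_coe])
      _ ≤ ∑ i ∈ Finset.range (q + c), (extZ mu i - j) :=
          Finset.sum_le_sum_of_subset (Finset.range_subset_range.mpr (Nat.le_add_right q c))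
      _ = ∑ i ∈ Finset.range c, (extZ mu i - j) := by
          refine (Finset.sum_subset (Finset.range_subset_range.mpr (Nat.le_add_left c q)) ?_).symm
          intro i hi hni
          have hc : c ≤ i := by simpa using hni
          have hle : extZ mu i ≤ j := le_trans (hanti hc) (le_of_eq hj.symm)
          omega
  have heq : ∑ i ∈ Finset.range c, extZ mu i
      = c * j + ∑ i ∈ Finset.range c, (extZ mu i - j) := by
    have hterm : ∀ i ∈ Finset.range c, extZ mu i = j + (extZ mu i - j) := by
      intro i hi
      have hle : j ≤ extZ mu i :=
        le_trans (le_of_eq hj) (hanti (le_of_lt (Finset.mem_range.mp hi)))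
      omega
    rw [Finset.sum_congr rfl hterm, Finset.sum_add_distrib, Finset.sum_const,
      Finset.card_range, smul_eq_mul]
  omega

/-- Let `0 → P → Q → R → 0` be a short exact sequence of finite-dimensional vector
spaces equipped with compatible nilpotent operators `NP`, `NQ`, `NR`, whose Jordan
forms are the partitions `lamP`, `lamQ`, `lamR` respectively.  Then
`lamQ ≥ lamP + lamR` in dominance order, where `lamP + lamR` is the partition obtained
by merging the parts; equivalently, for all `a b`, the sum of the first `a` parts of
`lamP` plus the sum of the first `b` parts of `lamR` is at most the sum of the first
`a + b` parts of `lamQ`. -/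
theorem stmt_4 (k : Type*) [Field k]
    (P Q R : Type*) [AddCommGroup P] [Module k P] [AddCommGroup Q] [Module k Q]
    [AddCommGroup R] [Module k R]
    (NP : P →ₗ[k] P) (NQ : Q →ₗ[k] Q) (NR : R →ₗ[k] R)
    (f : P →ₗ[k] Q) (g : Q →ₗ[k] R)
    (hf : Function.Injective f) (hg : Function.Surjective g)
    (hexact : LinearMap.range f = LinearMap.ker g)
    (hfN : ∀ x : P, f (NP x) = NQ (f x)) (hgN : ∀ x : Q, g (NQ x) = NR (g x))
    (p q r : ℕ) (lamP : Fin p → ℕ) (lamQ : Fin q → ℕ) (lamR : Fin r → ℕ)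
    (hP : Antitone lamP) (hQ : Antitone lamQ) (hR : Antitone lamR)
    (eP : P ≃ₗ[k] ((i : Fin p) → (Fin (lamP i) → k)))
    (heP : ∀ x : P, eP (NP x) = fun i => Jfun k (lamP i) (eP x i))
    (eQ : Q ≃ₗ[k] ((i : Fin q) → (Fin (lamQ i) → k)))
    (heQ : ∀ x : Q, eQ (NQ x) = fun i => Jfun k (lamQ i) (eQ x i))
    (eR : R ≃ₗ[k] ((i : Fin r) → (Fin (lamR i) → k)))
    (heR : ∀ x : R, eR (NR x) = fun i => Jfun k (lamR i) (eR x i)) :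
    ∀ a b : ℕ,
      (∑ i ∈ Finset.range a, extZ lamP i) + (∑ i ∈ Finset.range b, extZ lamR i) ≤
        ∑ i ∈ Finset.range (a + b), extZ lamQ i := by
  intro a b
  haveI : Module.Finite k Q := Module.Finite.equiv eQ.symm
  set j := extZ lamQ (a + b) with hj
  have hrP : finrank k (LinearMap.range (NP ^ j)) = ∑ i, (lamP i - j) := by
    rw [rank_conj eP NP (Tlin k lamP) (fun x => heP x) j, rank_Tlin_pow]
  have hrQ : finrank k (LinearMap.range (NQ ^ j)) = ∑ i, (lamQ i - j) := by
    rw [rank_conj eQ NQ (Tlin k lamQ) (fun x => heQ x) j, rank_Tlin_pow]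
  have hrR : finrank k (LinearMap.range (NR ^ j)) = ∑ i, (lamR i - j) := by
    rw [rank_conj eR NR (Tlin k lamR) (fun x => heR x) j, rank_Tlin_pow]
  have hD := rank_ineq NP NQ NR f g hf hg hexact hfN hgN j
  rw [hrP, hrQ, hrR] at hD
  have hA := sumA lamP a j
  have hB := sumA lamR b j
  have hC := sumB lamQ hQ (a + b)
  rw [← hj] at hC
  calc (∑ i ∈ Finset.range a, extZ lamP i) + (∑ i ∈ Finset.range b, extZ lamR i)
      ≤ (a * j + ∑ i, (lamP i - j)) + (b * j + ∑ i, (lamR i - j)) := Nat.add_le_add hA hB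
    _ = (a + b) * j + (∑ i, (lamP i - j) + ∑ i, (lamR i - j)) := by ring
    _ ≤ (a + b) * j + ∑ i, (lamQ i - j) := Nat.add_le_add_left hD _
    _ ≤ ∑ i ∈ Finset.range (a + b), extZ lamQ i := hC
end

section
/- For a ≥ b ≥ c ≥ 0, the cokernel of a generic k[N]-module homomorphism from k[N]/(N^b) to k[N]/(N^a) ⊕ k[N]/(N^c) is isomorphic to k[N]/(N^{a+c−b}). More precisely, if f sends the generator of k[N]/(N^b) to (x, y) where x generates k[N]/(N^a) modulo N^{a−b} times a generator (i.e., x = N^{a−b}·u with u a generator) and y is a generator of k[N]/(N^c), then coker(f) ≅ k[N]/(N^{a+c−b}). -/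
/-!
Over any commutative ring `R`, if `u` generates `R ⧸ I` and `y` generates `R ⧸ J`, then in the
quotient of `R ⧸ I × R ⧸ J` by `(s • u, y)` the class of `(0, y)` equals that of `(-s • u, 0)`,
so `p ↦ [(p • u, 0)]` is onto, and its kernel is `I + s J`. For `R = k[N]`, `I = (N^a)`,
`J = (N^c)` and `s = N^(a-b)` this ideal is `(N^a, N^(a-b+c)) = (N^(a+c-b))`.
-/

/-- The cyclic `k[N]`-module `k[N]/(N^m)`, modeled as the quotient of the polynomial
ring by the ideal generated by `X^m`. -/
abbrev Cyc (k : Type*) [Field k] (m : ℕ) : Type _ :=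
  Polynomial k ⧸ Ideal.span {(Polynomial.X : Polynomial k) ^ m}

namespace Ideal.Quotient

variable {R : Type*} [CommRing R] {I J : Ideal R}

theorem smul_eq_mk_mul (p : R) (z : R ⧸ I) : p • z = mk I p * z := by
  rw [Algebra.smul_def, algebraMap_eq]

theorem isUnit_of_span_singleton_eq_top {u : R ⧸ I} (hu : Submodule.span R {u} = ⊤) :
    IsUnit u := by
  obtain ⟨p, hp⟩ := (Submodule.span_singleton_eq_top_iff R u).mp hu 1
  exact .of_mul_eq_one (mk I p) (by rw [mul_comm, ← smul_eq_mk_mul, hp])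

theorem smul_eq_zero_iff_of_isUnit {u : R ⧸ I} (hu : IsUnit u) (p : R) :
    p • u = 0 ↔ p ∈ I := by
  rw [smul_eq_mk_mul, hu.mul_left_eq_zero, eq_zero_iff_mem]

theorem range_eq_span_apply_one {M : Type*} [AddCommMonoid M] [Module R M]
    (f : (R ⧸ I) →ₗ[R] M) : LinearMap.range f = Submodule.span R {f 1} := by
  have hone : Submodule.span R {(1 : R ⧸ I)} = ⊤ :=
    (Submodule.span_singleton_eq_top_iff R _).mpr fun z ↦
      ⟨(mk_surjective z).choose, by rw [smul_eq_mk_mul, mul_one, (mk_surjective z).choose_spec]⟩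
  rw [LinearMap.range_eq_map, ← hone, Submodule.map_span, Set.image_singleton]

section PairQuotient

variable (s : R) (u : R ⧸ I) (y : R ⧸ J)

noncomputable def toQuotSpanPair :
    R →ₗ[R] ((R ⧸ I) × (R ⧸ J)) ⧸ Submodule.span R {(s • u, y)} :=
  (Submodule.span R {(s • u, y)}).mkQ ∘ₗ LinearMap.toSpanSingleton R _ (u, 0)

variable {s u y}

theorem toQuotSpanPair_surjective (hu : Submodule.span R {u} = ⊤)
    (hy : Submodule.span R {y} = ⊤) : Function.Surjective (toQuotSpanPair s u y) := by
  intro z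
  obtain ⟨⟨v, w⟩, rfl⟩ := Submodule.mkQ_surjective _ z
  obtain ⟨p, rfl⟩ := (Submodule.span_singleton_eq_top_iff R u).mp hu v
  obtain ⟨q, rfl⟩ := (Submodule.span_singleton_eq_top_iff R y).mp hy w
  -- `(p • u, q • y) ≡ (p • u, q • y) - q • (s • u, y) = ((p - q * s) • u, 0)`
  refine ⟨p - q * s, (Submodule.Quotient.eq _).mpr ?_⟩
  convert Submodule.smul_mem _ (-q) (Submodule.mem_span_singleton_self (s • u, y)) using 1
  ext <;> simp [sub_smul, mul_smul]

theorem ker_toQuotSpanPair (hu : IsUnit u) (hy : IsUnit y) :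
    LinearMap.ker (toQuotSpanPair s u y) = I ⊔ Ideal.span {s} * J := by
  ext p
  have hmem : p ∈ LinearMap.ker (toQuotSpanPair s u y) ↔
      ∃ q : R, (q * s - p) • u = 0 ∧ q • y = 0 := by
    simp only [toQuotSpanPair, LinearMap.mem_ker, LinearMap.comp_apply, Submodule.mkQ_apply,
      LinearMap.toSpanSingleton_apply, Submodule.Quotient.mk_eq_zero, Submodule.mem_span_singleton,
      Prod.smul_mk, Prod.mk.injEq, smul_zero, smul_smul, sub_smul, sub_eq_zero]
  rw [hmem, Submodule.mem_sup]
  simp only [smul_eq_zero_iff_of_isUnit hu, smul_eq_zero_iff_of_isUnit hy,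
    Ideal.mem_span_singleton_mul]
  constructor
  · rintro ⟨q, hI, hJ⟩
    exact ⟨_, I.neg_mem hI, _, ⟨q, hJ, rfl⟩, by ring⟩
  · rintro ⟨i, hi, _, ⟨q, hq, rfl⟩, rfl⟩
    exact ⟨q, by simpa [mul_comm] using I.neg_mem hi, hq⟩

noncomputable def quotSpanPairEquiv (hu : Submodule.span R {u} = ⊤)
    (hy : Submodule.span R {y} = ⊤) :
    (((R ⧸ I) × (R ⧸ J)) ⧸ Submodule.span R {(s • u, y)}) ≃ₗ[R]
      R ⧸ (I ⊔ Ideal.span {s} * J) :=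
  (LinearMap.quotKerEquivOfSurjective _ (toQuotSpanPair_surjective hu hy)).symm.trans
    (Submodule.quotEquivOfEq _ _ (ker_toQuotSpanPair (isUnit_of_span_singleton_eq_top hu)
      (isUnit_of_span_singleton_eq_top hy)))

end PairQuotient

end Ideal.Quotient

theorem Ideal.span_pow_sup_span_pow_mul_span_pow {R : Type*} [CommSemiring R] (x : R)
    {a e c : ℕ} (h : e + c ≤ a) :
    Ideal.span {x ^ a} ⊔ Ideal.span {x ^ e} * Ideal.span {x ^ c} = Ideal.span {x ^ (e + c)} := by
  rw [Ideal.span_singleton_mul_span_singleton, ← pow_add, sup_eq_right,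
    Ideal.span_singleton_le_span_singleton]
  exact pow_dvd_pow x h

open Polynomial in
/-- For `a ≥ b ≥ c`, the cokernel of a generic `k[N]`-module homomorphism
`k[N]/(N^b) → k[N]/(N^a) ⊕ k[N]/(N^c)` is isomorphic to `k[N]/(N^{a+c-b})`: if `f`
sends the generator to `(X^{a-b} • u, y)` with `u` a generator of `k[N]/(N^a)` and
`y` a generator of `k[N]/(N^c)`, then `coker f ≅ k[N]/(N^{a+c−b})`. -/
theorem stmt_5 (k : Type*) [Field k] (a b c : ℕ) (hba : b ≤ a) (hcb : c ≤ b)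
    (u : Cyc k a) (y : Cyc k c)
    (hu : Submodule.span (Polynomial k) {u} = ⊤)
    (hy : Submodule.span (Polynomial k) {y} = ⊤)
    (f : Cyc k b →ₗ[Polynomial k] Cyc k a × Cyc k c)
    (hf : f (Ideal.Quotient.mk _ 1) = ((Polynomial.X : Polynomial k) ^ (a - b) • u, y)) :
    Nonempty (((Cyc k a × Cyc k c) ⧸ LinearMap.range f) ≃ₗ[Polynomial k]
      Cyc k (a + c - b)) := by
  have hrange : LinearMap.range f = Submodule.span k[X] {((X : k[X]) ^ (a - b) • u, y)} := by
    rw [Ideal.Quotient.range_eq_span_apply_one, ← map_one (Ideal.Quotient.mk _), hf]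
  have hideal : Ideal.span {(X : k[X]) ^ a} ⊔ Ideal.span {X ^ (a - b)} * Ideal.span {X ^ c} =
      Ideal.span {X ^ (a + c - b)} := by
    rw [Ideal.span_pow_sup_span_pow_mul_span_pow _ (by omega), show a - b + c = a + c - b by omega]
  exact ⟨(Submodule.quotEquivOfEq _ _ hrange).trans
    ((Ideal.Quotient.quotSpanPairEquiv hu hy).trans (Submodule.quotEquivOfEq _ _ hideal))⟩
end

section
/- If partitions λ and μ are t-interlaced for some t ≥ 0, then diff(μ,λ) := (μ₁, …, μ_t, μ_{t+1}+μ_{t+2}−λ₁, μ_{t+3}+μ_{t+4}−λ₂, …) is a partition (its entries are nonnegative and weakly decreasing), and diff(μ,λ) and μ are (−t)-interlaced. -/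
/-- Partitions `lam` and `mu` (0-indexed) are `t`-interlaced. -/
def Interlaced (lam mu : ℕ → ℕ) (t : ℤ) : Prop :=
  (∀ i : ℕ, (i : ℤ) < -t → lam i = mu i) ∧
  (∀ i : ℕ, -t ≤ (i : ℤ) →
    lam i ≤ mu (2 * (i : ℤ) + t).toNat ∧ mu (2 * (i : ℤ) + t + 1).toNat ≤ lam i)

/-- For `t ≥ 0`, `diff(μ, λ) = (μ₁, …, μ_t, μ_{t+1} + μ_{t+2} − λ₁,
μ_{t+3} + μ_{t+4} − λ₂, …)` (0-indexed here). -/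
def diffPos (t : ℕ) (mu lam : ℕ → ℕ) (i : ℕ) : ℕ :=
  if i < t then mu i else mu (2 * i - t) + mu (2 * i - t + 1) - lam (i - t)

/-- If partitions `lam` and `mu` are `t`-interlaced for some `t ≥ 0`, then
`diff(μ, λ)` is a partition (entries weakly decreasing; nonnegativity is automatic
in `ℕ`), and `diff(μ, λ)` and `μ` are `(−t)`-interlaced. -/
theorem stmt_7 (lam mu : ℕ → ℕ) (hlam : Antitone lam) (hmu : Antitone mu)
    (hlf : {i | lam i ≠ 0}.Finite) (hmf : {i | mu i ≠ 0}.Finite)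
    (t : ℕ) (h : Interlaced lam mu (t : ℤ)) :
    Antitone (diffPos t mu lam) ∧ Interlaced (diffPos t mu lam) mu (-(t : ℤ)) := by
  have key : ∀ i : ℕ, lam i ≤ mu (2 * i + t) ∧ mu (2 * i + t + 1) ≤ lam i := by
    intro i
    have hi : -(t : ℤ) ≤ (i : ℤ) := by omega
    have := h.2 i hi
    have e1 : (2 * (i : ℤ) + (t : ℤ)).toNat = 2 * i + t := by omega
    have e2 : (2 * (i : ℤ) + (t : ℤ) + 1).toNat = 2 * i + t + 1 := by omega
    rw [e1, e2] at this
    exact this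
  have key' : ∀ j : ℕ, t ≤ j →
      lam (j - t) ≤ mu (2 * j - t) ∧ mu (2 * j - t + 1) ≤ lam (j - t) := by
    intro j hj
    have := key (j - t)
    have e1 : 2 * (j - t) + t = 2 * j - t := by omega
    rw [e1] at this
    exact this
  constructor
  · apply antitone_nat_of_succ_le
    intro i
    by_cases h1 : i + 1 < t
    · simp only [diffPos, if_pos h1, if_pos (show i < t by omega)]
      exact hmu (by omega)
    · by_cases h2 : i < t
      · -- i + 1 = t
        simp only [diffPos, if_neg h1, if_pos h2]
        have k := key' (i + 1) (by omega)
        have hm : mu (2 * (i + 1) - t) ≤ mu i := hmu (by omega)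
        omega
      · simp only [diffPos, if_neg h1, if_neg h2]
        have k1 := key' (i + 1) (by omega)
        have k2 := key' i (by omega)
        have hm : mu (2 * (i + 1) - t) ≤ mu (2 * i - t + 1) := hmu (by omega)
        omega
  · constructor
    · intro i hi
      have hi' : i < t := by omega
      simp [diffPos, hi']
    · intro i hi
      have hi' : t ≤ i := by omega
      have e1 : (2 * (i : ℤ) + -(t : ℤ)).toNat = 2 * i - t := by omega
      have e2 : (2 * (i : ℤ) + -(t : ℤ) + 1).toNat = 2 * i - t + 1 := by omega
      rw [e1, e2]
      simp only [diffPos, if_neg (show ¬ i < t by omega)]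
      have k := key' i hi'
      omega
end

section
/- Suppose partitions λ and μ are t-interlaced for some t ≤ 0, and ν is a partition with ν₁ + ⋯ + ν_k > diff(μ,λ)₁ + ⋯ + diff(μ,λ)_k for some k ≥ 1. Then μ is not ≥ λ + ν in dominance order, where λ + ν is the partition obtained by merging the parts of λ and ν. -/
/-- For `t = -s ≤ 0`, `diff(μ, λ)` has `j`-th part (0-indexed)
`μ_{s+2j+1} + μ_{s+2j+2} − λ_{s+j+1}` (1-indexed:
`diff(μ,λ) = (μ_{s+1} + μ_{s+2} − λ_{s+1}, μ_{s+3} + μ_{s+4} − λ_{s+2}, …)`). -/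
def diffNeg (s : ℕ) (mu lam : ℕ → ℕ) (i : ℕ) : ℕ :=
  mu (s + 2 * i) + mu (s + 2 * i + 1) - lam (s + i)


lemma split_sum (f : ℕ → ℕ) (m n : ℕ) :
    ∑ i ∈ Finset.range (m + n), f i
      = ∑ i ∈ Finset.range m, f i + ∑ j ∈ Finset.range n, f (m + j) := by
  induction n with
  | zero => simp
  | succ n ih => rw [← Nat.add_assoc, Finset.sum_range_succ, Finset.sum_range_succ, ih]; ring

lemma pair_sum (f : ℕ → ℕ) (K : ℕ) :
    ∑ i ∈ Finset.range (2 * K), f i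
      = ∑ j ∈ Finset.range K, (f (2 * j) + f (2 * j + 1)) := by
  induction K with
  | zero => simp
  | succ n ih =>
    have h2 : 2 * (n + 1) = 2 * n + 1 + 1 := by ring
    rw [h2, Finset.sum_range_succ, Finset.sum_range_succ, ih, Finset.sum_range_succ]
    ring

/-- Suppose partitions `lam` and `mu` are `(−s)`-interlaced and `nu` is a partition
with `ν₁ + ⋯ + ν_K > diff(μ,λ)₁ + ⋯ + diff(μ,λ)_K` for some `K ≥ 1`.  Then `μ` is not
`≥ λ + ν` in dominance order: equivalently, it fails that for all `a, b` the sum of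
the first `a` parts of `λ` plus the first `b` parts of `ν` is at most the sum of the
first `a + b` parts of `μ`. -/
theorem stmt_8 (lam mu nu : ℕ → ℕ)
    (hlam : Antitone lam) (hmu : Antitone mu) (hnu : Antitone nu)
    (hlf : {i | lam i ≠ 0}.Finite) (hmf : {i | mu i ≠ 0}.Finite)
    (hnf : {i | nu i ≠ 0}.Finite)
    (s : ℕ) (hint : Interlaced lam mu (-(s : ℤ)))
    (K : ℕ) (hK : 1 ≤ K)
    (hgt : ∑ i ∈ Finset.range K, diffNeg s mu lam i < ∑ i ∈ Finset.range K, nu i) :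
    ¬ (∀ a b : ℕ,
        (∑ i ∈ Finset.range a, lam i) + (∑ i ∈ Finset.range b, nu i) ≤
          ∑ i ∈ Finset.range (a + b), mu i) := by
  intro h
  have H := h (s + K) K
  have hlm : ∑ i ∈ Finset.range s, lam i = ∑ i ∈ Finset.range s, mu i := by
    apply Finset.sum_congr rfl
    intro i hi
    exact hint.1 i (by simpa using (Finset.mem_range.mp hi))
  have hbd : ∀ j ∈ Finset.range K,
      diffNeg s mu lam j + lam (s + j) = mu (s + 2 * j) + mu (s + 2 * j + 1) := by
    intro j _
    have h2 := (hint.2 (s + j) (by push_cast; omega)).1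
    have e : ((2 : ℤ) * (↑(s + j)) + -(s:ℤ)).toNat = s + 2 * j := by push_cast; omega
    rw [e] at h2
    unfold diffNeg
    omega
  have hsum : ∑ j ∈ Finset.range K, diffNeg s mu lam j
        + ∑ j ∈ Finset.range K, lam (s + j)
      = ∑ i ∈ Finset.range (2 * K), mu (s + i) := by
    rw [pair_sum (fun i => mu (s + i)), ← Finset.sum_add_distrib]
    exact Finset.sum_congr rfl hbd
  rw [split_sum lam s K, show s + K + K = s + 2 * K by ring, split_sum mu s (2 * K), hlm] at H
  omega
end

section
/- Toggles at incomparable-in-covers elements commute: if x, y ∈ P are distinct, x is not covered by y, and y is not covered by x, then t_x ∘ t_y = t_y ∘ t_x as operations on reverse plane partitions of P with entries in [0,N]. -/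
open scoped Classical in
/-- Max of `ρ` over the upper covers of `x` (0 if `x` is maximal). -/
noncomputable def upMax {P : Type*} [PartialOrder P] [Fintype P]
    (ρ : P → ℕ) (x : P) : ℕ :=
  (Finset.univ.filter fun y => x ⋖ y).sup ρ

open scoped Classical in
/-- Min of `ρ` over the lower covers of `x` (N if `x` is minimal). -/
noncomputable def downMin {P : Type*} [PartialOrder P] [Fintype P]
    (N : ℕ) (ρ : P → ℕ) (x : P) : ℕ :=
  (Finset.univ.filter fun y => y ⋖ x).fold min N ρ

open scoped Classical in
/-- The toggle of `ρ` at `x`: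
`(t_x ρ)(x) = max_{x ⋖ y₁} ρ(y₁) + min_{y₂ ⋖ x} ρ(y₂) − ρ(x)`,
with the max interpreted as `0` if `x` is maximal and the min as `N` if `x` is
minimal, and `(t_x ρ)(y) = ρ(y)` for `y ≠ x`. -/
noncomputable def toggle {P : Type*} [PartialOrder P] [Fintype P]
    (N : ℕ) (x : P) (ρ : P → ℕ) (y : P) : ℕ :=
  if y = x then upMax ρ x + downMin N ρ x - ρ x else ρ y


open scoped Classical in
lemma upMax_congr {P : Type*} [PartialOrder P] [Fintype P]
    (ρ σ : P → ℕ) (x : P) (h : ∀ z, x ⋖ z → ρ z = σ z) :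
    upMax ρ x = upMax σ x := by
  unfold upMax
  apply Finset.sup_congr rfl
  intro z hz
  exact h z (Finset.mem_filter.mp hz).2

open scoped Classical in
lemma downMin_congr {P : Type*} [PartialOrder P] [Fintype P]
    (N : ℕ) (ρ σ : P → ℕ) (x : P) (h : ∀ z, z ⋖ x → ρ z = σ z) :
    downMin N ρ x = downMin N σ x := by
  unfold downMin
  apply Finset.fold_congr
  intro z hz
  exact h z (Finset.mem_filter.mp hz).2

lemma toggle_self {P : Type*} [PartialOrder P] [Fintype P]
    (N : ℕ) (x : P) (ρ : P → ℕ) :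
    toggle N x ρ x = upMax ρ x + downMin N ρ x - ρ x := if_pos rfl

lemma toggle_ne {P : Type*} [PartialOrder P] [Fintype P]
    (N : ℕ) (x z : P) (ρ : P → ℕ) (h : z ≠ x) :
    toggle N x ρ z = ρ z := if_neg h

/-- Toggles at distinct elements not related by a covering relation commute, as
operations on reverse plane partitions of `P` with entries in `[0, N]`. -/
theorem stmt_11 {P : Type*} [PartialOrder P] [Fintype P] (N : ℕ)
    (x y : P) (hxy : x ≠ y) (hc₁ : ¬ x ⋖ y) (hc₂ : ¬ y ⋖ x)
    (ρ : P → ℕ) (hρ : Antitone ρ) (hbd : ∀ z, ρ z ≤ N) :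
    toggle N x (toggle N y ρ) = toggle N y (toggle N x ρ) := by
  funext z
  by_cases hzx : z = x
  · rw [hzx, toggle_self, toggle_ne _ _ _ _ hxy, toggle_ne _ _ _ _ hxy, toggle_self,
      upMax_congr (toggle N y ρ) ρ x
        (fun w hw => toggle_ne _ _ _ _ (fun h => hc₁ (h ▸ hw))),
      downMin_congr N (toggle N y ρ) ρ x
        (fun w hw => toggle_ne _ _ _ _ (fun h => hc₂ (h ▸ hw)))]
  · by_cases hzy : z = y
    · rw [hzy, toggle_ne _ _ _ _ (Ne.symm hxy), toggle_self, toggle_self,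
        toggle_ne _ _ _ _ (Ne.symm hxy),
        upMax_congr (toggle N x ρ) ρ y
          (fun w hw => toggle_ne _ _ _ _ (fun h => hc₂ (h ▸ hw))),
        downMin_congr N (toggle N x ρ) ρ y
          (fun w hw => toggle_ne _ _ _ _ (fun h => hc₁ (h ▸ hw)))]
    · rw [toggle_ne _ _ _ _ hzx, toggle_ne _ _ _ _ hzy,
        toggle_ne _ _ _ _ hzy, toggle_ne _ _ _ _ hzx]
end

section
/- In the poset [2] × [2] (the diamond/minuscule poset of type A₃ with m = 2), promotion pro = t_top ∘ t_right ∘ t_left ∘ t_bottom (toggling in a linear extension order compatible with the poset, one toggle per element) acting on order-reversing maps ρ : [2]×[2] → {0,…,N} satisfies pro⁴ = id, and 4 is the exact order (there exists ρ with pro^k(ρ) ≠ ρ for 0 < k < 4, when N ≥ 1). -/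
open scoped Classical in
/-- Promotion on the poset `[2] × [2]` (modeled as `Fin 2 × Fin 2` with componentwise
order): the composition of the four toggles, toggling along a linear extension from
the top down, `pro = t_{(0,0)} ∘ t_{(1,0)} ∘ t_{(0,1)} ∘ t_{(1,1)}`. -/
noncomputable def pro (N : ℕ) (ρ : Fin 2 × Fin 2 → ℕ) : Fin 2 × Fin 2 → ℕ :=
  toggle N (0, 0) (toggle N (1, 0) (toggle N (0, 1) (toggle N (1, 1) ρ)))

/-!
On an order-reversing map with `a = ρ(0,0) ≥ b = ρ(0,1), c = ρ(1,0) ≥ d = ρ(1,1)` and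
`a ≤ N`, promotion is the piecewise-linear map
`(a, b, c, d) ↦ (N - d, a + min b c - b - d, a + min b c - c - d, min b c - d)`.
Its square is `(a, b, c, d) ↦ (N + d - min b c, N - c, N - b, a - max b c)`, which is
visibly an involution, so `pro⁴ = id`. The constant map `N` has an orbit of length exactly `4`.
-/

section Toggle

variable {P : Type*} [PartialOrder P] [Fintype P]

lemma upMax_eq_sup (ρ : P → ℕ) {x : P} {s : Finset P} (hs : ∀ y, y ∈ s ↔ x ⋖ y) :
    upMax ρ x = s.sup ρ := by
  classical
  rw [upMax]; congr; ext y; simp [hs]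

lemma downMin_eq_fold (N : ℕ) (ρ : P → ℕ) {x : P} {s : Finset P} (hs : ∀ y, y ∈ s ↔ y ⋖ x) :
    downMin N ρ x = s.fold min N ρ := by
  classical
  rw [downMin]; congr; ext y; simp [hs]

lemma toggle_apply_self (N : ℕ) (x : P) (ρ : P → ℕ) :
    toggle N x ρ x = upMax ρ x + downMin N ρ x - ρ x := if_pos rfl

lemma toggle_apply_of_ne (N : ℕ) {x y : P} (ρ : P → ℕ) (h : y ≠ x) :
    toggle N x ρ y = ρ y := if_neg h

end Toggle

def rpp {P : Type*} [Preorder P] (N : ℕ) : Set (P → ℕ) :=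
  {ρ | Antitone ρ ∧ ∀ y, ρ y ≤ N}

section Diamond

variable (N : ℕ) (ρ : Fin 2 × Fin 2 → ℕ)

lemma upMax_zero_zero : upMax ρ (0, 0) = max (ρ (0, 1)) (ρ (1, 0)) := by
  rw [upMax_eq_sup ρ (s := {(0, 1), (1, 0)})]
  · simp
  · rintro ⟨i, j⟩; fin_cases i <;> fin_cases j <;> simp [Prod.mk_covBy_mk_iff]

lemma upMax_zero_one : upMax ρ (0, 1) = ρ (1, 1) := by
  rw [upMax_eq_sup ρ (s := {(1, 1)})]
  · simp
  · rintro ⟨i, j⟩; fin_cases i <;> fin_cases j <;> simp [Prod.mk_covBy_mk_iff]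

lemma upMax_one_zero : upMax ρ (1, 0) = ρ (1, 1) := by
  rw [upMax_eq_sup ρ (s := {(1, 1)})]
  · simp
  · rintro ⟨i, j⟩; fin_cases i <;> fin_cases j <;> simp [Prod.mk_covBy_mk_iff]

lemma upMax_one_one : upMax ρ (1, 1) = 0 := by
  rw [upMax_eq_sup ρ (s := ∅)]
  · simp
  · rintro ⟨i, j⟩; fin_cases i <;> fin_cases j <;> simp [Prod.mk_covBy_mk_iff]

lemma downMin_zero_zero : downMin N ρ (0, 0) = N := by
  rw [downMin_eq_fold N ρ (s := ∅)]
  · simp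
  · rintro ⟨i, j⟩; fin_cases i <;> fin_cases j <;> simp [Prod.mk_covBy_mk_iff]

lemma downMin_zero_one : downMin N ρ (0, 1) = min (ρ (0, 0)) N := by
  rw [downMin_eq_fold N ρ (s := {(0, 0)})]
  · simp
  · rintro ⟨i, j⟩; fin_cases i <;> fin_cases j <;> simp [Prod.mk_covBy_mk_iff]

lemma downMin_one_zero : downMin N ρ (1, 0) = min (ρ (0, 0)) N := by
  rw [downMin_eq_fold N ρ (s := {(0, 0)})]
  · simp
  · rintro ⟨i, j⟩; fin_cases i <;> fin_cases j <;> simp [Prod.mk_covBy_mk_iff]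

lemma downMin_one_one : downMin N ρ (1, 1) = min (ρ (0, 1)) (min (ρ (1, 0)) N) := by
  rw [downMin_eq_fold N ρ (s := {(0, 1), (1, 0)})]
  · simp
  · rintro ⟨i, j⟩; fin_cases i <;> fin_cases j <;> simp [Prod.mk_covBy_mk_iff]

lemma pro_apply_one_one : pro N ρ (1, 1) = min (ρ (0, 1)) (min (ρ (1, 0)) N) - ρ (1, 1) := by
  simp [pro, toggle_apply_self, toggle_apply_of_ne, upMax_one_one, downMin_one_one]

lemma pro_apply_zero_one :
    pro N ρ (0, 1) = pro N ρ (1, 1) + min (ρ (0, 0)) N - ρ (0, 1) := by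
  simp [pro, toggle_apply_self, toggle_apply_of_ne, upMax_zero_one, downMin_zero_one]

lemma pro_apply_one_zero :
    pro N ρ (1, 0) = pro N ρ (1, 1) + min (ρ (0, 0)) N - ρ (1, 0) := by
  simp [pro, toggle_apply_self, toggle_apply_of_ne, upMax_one_zero, downMin_one_zero]

lemma pro_apply_zero_zero :
    pro N ρ (0, 0) = max (pro N ρ (0, 1)) (pro N ρ (1, 0)) + N - ρ (0, 0) := by
  simp [pro, toggle_apply_self, toggle_apply_of_ne, upMax_zero_zero, downMin_zero_zero]

variable {N ρ}

lemma mem_rpp_iff : ρ ∈ rpp N ↔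
    ρ (0, 1) ≤ ρ (0, 0) ∧ ρ (1, 0) ≤ ρ (0, 0) ∧ ρ (1, 1) ≤ ρ (0, 1) ∧ ρ (1, 1) ≤ ρ (1, 0) ∧
      ρ (0, 0) ≤ N := by
  constructor
  · rintro ⟨hρ, hN⟩
    exact ⟨hρ (by decide), hρ (by decide), hρ (by decide), hρ (by decide), hN _⟩
  · rintro ⟨h01, h10, h11₀₁, h11₁₀, hN⟩
    have hρ : Antitone ρ := by
      rintro ⟨i, j⟩ ⟨k, l⟩ h
      fin_cases i <;> fin_cases j <;> fin_cases k <;> fin_cases l <;>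
        simp_all [Prod.mk_le_mk, h11₀₁.trans h01]
    exact ⟨hρ, fun y => (hρ (Prod.mk_le_mk.2 ⟨Fin.zero_le _, Fin.zero_le _⟩)).trans hN⟩

-- Stated additively, so that `omega` does not have to case on truncated subtraction.
lemma pro_apply_of_mem_rpp (hρ : ρ ∈ rpp N) :
    pro N ρ (0, 0) + ρ (1, 1) = N ∧
    pro N ρ (0, 1) + ρ (0, 1) + ρ (1, 1) = ρ (0, 0) + min (ρ (0, 1)) (ρ (1, 0)) ∧
    pro N ρ (1, 0) + ρ (1, 0) + ρ (1, 1) = ρ (0, 0) + min (ρ (0, 1)) (ρ (1, 0)) ∧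
    pro N ρ (1, 1) + ρ (1, 1) = min (ρ (0, 1)) (ρ (1, 0)) := by
  have := mem_rpp_iff.1 hρ
  rw [pro_apply_zero_zero, pro_apply_zero_one, pro_apply_one_zero, pro_apply_one_one]
  omega

lemma pro_mem_rpp (hρ : ρ ∈ rpp N) : pro N ρ ∈ rpp N := by
  have := mem_rpp_iff.1 hρ
  have := pro_apply_of_mem_rpp hρ
  rw [mem_rpp_iff]
  omega

lemma pro_pro_apply_of_mem_rpp (hρ : ρ ∈ rpp N) :
    pro N (pro N ρ) (0, 0) + min (ρ (0, 1)) (ρ (1, 0)) = N + ρ (1, 1) ∧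
    pro N (pro N ρ) (0, 1) + ρ (1, 0) = N ∧
    pro N (pro N ρ) (1, 0) + ρ (0, 1) = N ∧
    pro N (pro N ρ) (1, 1) + max (ρ (0, 1)) (ρ (1, 0)) = ρ (0, 0) := by
  have h₀ := mem_rpp_iff.1 hρ
  have h₁ := pro_apply_of_mem_rpp hρ
  have h₂ := pro_apply_of_mem_rpp (pro_mem_rpp hρ)
  omega

lemma ext_fin_two_prod {α : Type*} {f g : Fin 2 × Fin 2 → α} (h00 : f (0, 0) = g (0, 0))
    (h01 : f (0, 1) = g (0, 1)) (h10 : f (1, 0) = g (1, 0)) (h11 : f (1, 1) = g (1, 1)) :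
    f = g := by
  ext ⟨i, j⟩
  fin_cases i <;> fin_cases j <;> assumption

lemma pro_iterate_four (hρ : ρ ∈ rpp N) : (pro N)^[4] ρ = ρ := by
  have hρ₂ : pro N (pro N ρ) ∈ rpp N := pro_mem_rpp (pro_mem_rpp hρ)
  have := mem_rpp_iff.1 hρ
  have := pro_pro_apply_of_mem_rpp hρ
  have := pro_pro_apply_of_mem_rpp hρ₂
  apply ext_fin_two_prod <;>
    simp only [Function.iterate_succ_apply', Function.iterate_zero_apply] <;> omega

-- The orbit of the constant map `N` is `N, 0, N·𝟙_{(0,0)}, N·𝟙_{≠(1,1)}`.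
variable (N) in
lemma pro_iterate_const_apply_one_one {k : ℕ} (hk₀ : 0 < k) (hk₄ : k < 4) :
    (pro N)^[k] (fun _ => N) (1, 1) = 0 := by
  have hρ : (fun _ : Fin 2 × Fin 2 => N) ∈ rpp N := ⟨fun _ _ _ => le_rfl, fun _ => le_rfl⟩
  have := pro_apply_of_mem_rpp hρ
  have := pro_pro_apply_of_mem_rpp hρ
  have := pro_pro_apply_of_mem_rpp (pro_mem_rpp hρ)
  interval_cases k <;>
    simp only [Function.iterate_succ_apply', Function.iterate_zero_apply] <;> omega

end Diamond

/-- On reverse plane partitions of `[2] × [2]` with entries in `[0, N]`, promotion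
satisfies `pro⁴ = id`, and (for `N ≥ 1`) `4` is the exact order. -/
theorem stmt_16 (N : ℕ) :
    (∀ ρ : Fin 2 × Fin 2 → ℕ, Antitone ρ → (∀ y, ρ y ≤ N) → (pro N)^[4] ρ = ρ) ∧
    (1 ≤ N → ∃ ρ : Fin 2 × Fin 2 → ℕ, Antitone ρ ∧ (∀ y, ρ y ≤ N) ∧
      ∀ k : ℕ, 0 < k → k < 4 → (pro N)^[k] ρ ≠ ρ) := by
  refine ⟨fun ρ hA hN => pro_iterate_four ⟨hA, hN⟩, fun hN => ?_⟩
  refine ⟨fun _ => N, fun _ _ _ => le_rfl, fun _ => le_rfl, fun k hk₀ hk₄ h => ?_⟩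
  have hN₀ : N = 0 := by simpa [h] using pro_iterate_const_apply_one_one N hk₀ hk₄
  omega
end

section
/- Let P be a finite poset and let Δ_k(P) denote the largest cardinality of a subset of P that can be partitioned into k disjoint chains (Δ₀ = 0). Then the sequence λ_j := Δ_j(P) − Δ_{j−1}(P), j ≥ 1, is weakly decreasing and nonnegative; that is, (λ₁, λ₂, …) is a partition of |P|. -/
/-- `Δ_k(P)`: the largest cardinality of a subset of the finite poset `P` that can be
partitioned into `k` disjoint chains (`Δ₀ = 0`). -/
noncomputable def Delta (P : Type*) [PartialOrder P] [Fintype P] [DecidableEq P]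
    (k : ℕ) : ℕ :=
  sSup {n | ∃ C : Fin k → Finset P,
    (∀ i, IsChain (· ≤ ·) (C i : Set P)) ∧
    (Pairwise fun i j => Disjoint (C i) (C j)) ∧
    n = (Finset.univ.biUnion C).card}

/-!
Families of `k` disjoint chains of `P` are the integral flows of value `k` in the network
`source → enter x → exit x → enter y → sink` (`x < y`, plus the arc `source → sink`), in which
each arc `enter x → exit x` has capacity one; the elements covered are those whose arc carries
flow. Going back from a flow to chains, a flow of value `k` splits off a flow of value one,
whose covered set is a chain because an antichain in the covered set has to cross the cut
below it, which carries the whole value.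

For concavity take optimal flows `f`, `g` of values `k + 2` and `k`. The difference `f - g`
contains a source–sink path `p` conformal to it, and `f - p`, `g + p` are flows of value
`k + 1` covering as many elements in total as `f` and `g`; hence
`Δ_{k+2} + Δ_k ≤ 2 Δ_{k+1}`.
-/

open Finset

section Delta

variable {P : Type*} [PartialOrder P] [Fintype P] [DecidableEq P]

lemma bddAbove_Delta (k : ℕ) : BddAbove {n | ∃ C : Fin k → Finset P,
    (∀ i, IsChain (· ≤ ·) (C i : Set P)) ∧ (Pairwise fun i j => Disjoint (C i) (C j)) ∧
    n = (univ.biUnion C).card} :=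
  ⟨Fintype.card P, by rintro n ⟨C, -, -, rfl⟩; exact card_le_univ _⟩

theorem card_biUnion_le_Delta {k : ℕ} (C : Fin k → Finset P)
    (hC : ∀ i, IsChain (· ≤ ·) (C i : Set P)) (hD : Pairwise fun i j => Disjoint (C i) (C j)) :
    (univ.biUnion C).card ≤ Delta P k :=
  le_csSup (bddAbove_Delta k) ⟨C, hC, hD, rfl⟩

variable (P) in
theorem exists_card_biUnion_eq_Delta (k : ℕ) :
    ∃ C : Fin k → Finset P, (∀ i, IsChain (· ≤ ·) (C i : Set P)) ∧
      (Pairwise fun i j => Disjoint (C i) (C j)) ∧ (univ.biUnion C).card = Delta P k := by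
  have hne : Set.Nonempty {n | ∃ C : Fin k → Finset P,
      (∀ i, IsChain (· ≤ ·) (C i : Set P)) ∧ (Pairwise fun i j => Disjoint (C i) (C j)) ∧
      n = (univ.biUnion C).card} :=
    ⟨0, fun _ => ∅, fun _ => by simp, fun _ _ _ => disjoint_empty_left _,
      by rw [eq_comm, card_eq_zero]; ext; simp⟩
  obtain ⟨C, hC, hD, hCk⟩ := Nat.sSup_mem hne (bddAbove_Delta k)
  exact ⟨C, hC, hD, hCk.symm⟩

end Delta

theorem Monotone.sum_Icc_tsub {f : ℕ → ℕ} (hf : Monotone f) (n : ℕ) :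
    ∑ j ∈ Icc 1 n, (f j - f (j - 1)) = f n - f 0 := by
  rw [← Ico_add_one_right_eq_Icc, sum_Ico_eq_sum_range, Nat.add_sub_cancel,
    ← sum_range_tsub hf]
  exact sum_congr rfl fun i _ => by rw [add_comm, Nat.add_sub_cancel]

lemma Pi.single_mem_uIcc {ι : Type*} [DecidableEq ι] {d : ι → ℤ} {i₀ : ι} {c : ℤ}
    (hc : c ∈ Set.uIcc 0 (d i₀)) (i : ι) : (Pi.single i₀ c : ι → ℤ) i ∈ Set.uIcc 0 (d i) := by
  by_cases hi : i = i₀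
  · subst hi; simpa using hc
  · simp [hi]

lemma Finset.card_filter_mem_le_one {ι α : Type*} [Fintype ι] [DecidableEq α]
    {C : ι → Finset α} (hD : Pairwise fun i j => Disjoint (C i) (C j)) (x : α) :
    (univ.filter fun i => x ∈ C i).card ≤ 1 :=
  card_le_one.2 fun i hi j hj => by
    by_contra hij
    simp only [mem_filter, mem_univ, true_and] at hi hj
    exact disjoint_left.1 (hD hij) hi hj

theorem IsChain.exists_list_pairwise_lt {P : Type*} [PartialOrder P] [DecidableEq P]
    {c : Finset P} (hc : IsChain (· ≤ ·) (c : Set P)) :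
    ∃ l : List P, l.Pairwise (· < ·) ∧ l.toFinset = c := by
  induction c using Finset.strongInduction with
  | H c ih =>
  rcases c.eq_empty_or_nonempty with rfl | hne
  · exact ⟨[], List.Pairwise.nil, rfl⟩
  obtain ⟨m, hm⟩ := Finset.exists_minimal hne
  obtain ⟨l, hl, hlc⟩ := ih (c.erase m) (erase_ssubset hm.1) (hc.mono (by simp))
  refine ⟨m :: l, List.pairwise_cons.2 ⟨fun y hy => ?_, hl⟩, ?_⟩
  · obtain ⟨hym, hyc⟩ := mem_erase.1 (hlc ▸ List.mem_toFinset.2 hy)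
    refine lt_of_le_of_ne ((hc hm.1 hyc (Ne.symm hym)).resolve_right fun hle => hym ?_)
      (Ne.symm hym)
    exact le_antisymm hle (hm.2 hyc hle)
  · rw [List.toFinset_cons, hlc, insert_erase hm.1]

section Divergence

variable {V : Type*} [Fintype V]

def divergence : (V × V → ℤ) →+ (V → ℤ) where
  toFun g v := ∑ w, g (v, w) - ∑ w, g (w, v)
  map_zero' := by ext; simp
  map_add' g h := by ext v; simp only [Pi.add_apply, sum_add_distrib]; ring

lemma divergence_apply (g : V × V → ℤ) (v : V) :
    divergence g v = ∑ w, g (v, w) - ∑ w, g (w, v) := rfl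

lemma sum_natAbs_sub_lt_of_mem_uIcc {d s : V × V → ℤ} (hs : s ≠ 0)
    (hsd : ∀ e, s e ∈ Set.uIcc 0 (d e)) :
    ∑ e, (d e - s e).natAbs < ∑ e, (d e).natAbs := by
  obtain ⟨e₀, he₀⟩ := Function.ne_iff.1 hs
  refine sum_lt_sum (fun e _ => ?_) ⟨e₀, mem_univ _, ?_⟩
  · have := Set.mem_uIcc.1 (hsd e); omega
  · have := Set.mem_uIcc.1 (hsd e₀); simp only [Pi.zero_apply] at he₀; omega

variable [DecidableEq V]

lemma divergence_single (a b : V) (c : ℤ) :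
    divergence (Pi.single (a, b) c) = Pi.single a c - Pi.single b c := by
  ext v
  simp [divergence_apply, Pi.single_apply, Prod.ext_iff, ite_and]

lemma sum_divergence (g : V × V → ℤ) (U : Finset V) :
    ∑ u ∈ U, divergence g u = ∑ u ∈ U, ∑ w ∈ Uᶜ, (g (u, w) - g (w, u)) := by
  simp only [divergence_apply, ← sum_add_sum_compl U, sum_sub_distrib, sum_add_distrib]
  rw [sum_comm (s := U) (t := U) (f := fun u w => g (w, u))]
  ring

lemma exists_arc_of_one_le_divergence {d : V × V → ℤ} {v : V} (hv : 1 ≤ divergence d v) :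
    ∃ u s, s ≠ 0 ∧ (∀ e, s e ∈ Set.uIcc 0 (d e)) ∧
      divergence s = Pi.single v 1 - Pi.single u 1 := by
  obtain ⟨u, hu⟩ : ∃ u, 1 ≤ d (v, u) ∨ d (u, v) ≤ -1 := by
    by_contra! h
    have hout : ∑ u, d (v, u) ≤ 0 := sum_nonpos fun u _ => by linarith [(h u).1]
    have hin : 0 ≤ ∑ u, d (u, v) := sum_nonneg fun u _ => by linarith [(h u).2]
    rw [divergence_apply] at hv
    omega
  rcases hu with hu | hu
  · refine ⟨u, Pi.single (v, u) 1, by simp, Pi.single_mem_uIcc ?_, divergence_single _ _ _⟩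
    exact Set.mem_uIcc.2 (Or.inl ⟨zero_le_one, hu⟩)
  · refine ⟨u, Pi.single (u, v) (-1), by simp, Pi.single_mem_uIcc ?_, ?_⟩
    · exact Set.mem_uIcc.2 (Or.inr ⟨hu, by norm_num⟩)
    · rw [divergence_single, Pi.single_neg, Pi.single_neg]; abel

theorem exists_path_of_one_le_divergence (d : V × V → ℤ) (v : V) (hv : 1 ≤ divergence d v) :
    ∃ w p, divergence d w ≤ -1 ∧ (∀ e, p e ∈ Set.uIcc 0 (d e)) ∧
      divergence p = Pi.single v 1 - Pi.single w 1 := by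
  induction hM : ∑ e, (d e).natAbs using Nat.strong_induction_on generalizing d v with
  | _ M ih =>
  obtain ⟨u, s, hs, hsd, hdivs⟩ := exists_arc_of_one_le_divergence hv
  have hdiv : ∀ z, divergence (d - s) z =
      divergence d z - (Pi.single v 1 : V → ℤ) z + (Pi.single u 1 : V → ℤ) z := by
    intro z; rw [map_sub, hdivs]; simp only [Pi.sub_apply]; ring
  by_cases hu : divergence d u ≤ -1
  · exact ⟨u, s, hu, hsd, hdivs⟩
  have hu' : 1 ≤ divergence (d - s) u := by
    rw [hdiv, Pi.single_eq_same]
    rcases eq_or_ne u v with rfl | huv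
    · rw [Pi.single_eq_same]; omega
    · rw [Pi.single_eq_of_ne huv]; omega
  obtain ⟨w, p, hw, hpd, hdivp⟩ :=
    ih _ (hM ▸ sum_natAbs_sub_lt_of_mem_uIcc hs hsd) (d - s) u hu' rfl
  have hwu : w ≠ u := by rintro rfl; omega
  have hwv : w ≠ v := by
    rintro rfl
    rw [hdiv, Pi.single_eq_same, Pi.single_eq_of_ne hwu] at hw
    omega
  have hdw : divergence d w = divergence (d - s) w := by
    rw [hdiv, Pi.single_eq_of_ne hwv, Pi.single_eq_of_ne hwu]; ring
  refine ⟨w, p + s, hdw ▸ hw, fun e => ?_, ?_⟩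
  · have h1 := Set.mem_uIcc.1 (hpd e); have h2 := Set.mem_uIcc.1 (hsd e)
    simp only [Pi.sub_apply] at h1
    exact Set.mem_uIcc.2 (by simp only [Pi.add_apply]; omega)
  · rw [map_add, hdivp, hdivs]; abel

theorem exists_path_of_divergence_lt {f g : V × V → ℤ} {s t : V}
    (hcons : ∀ v, v ≠ s → v ≠ t → divergence f v = divergence g v)
    (hlt : divergence g s < divergence f s) :
    ∃ p, (∀ e, p e ∈ Set.uIcc 0 (f e - g e)) ∧
      divergence p = Pi.single s 1 - Pi.single t 1 := by
  obtain ⟨w, p, hw, hp, hdivp⟩ :=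
    exists_path_of_one_le_divergence (f - g) s (by rw [map_sub, Pi.sub_apply]; omega)
  obtain rfl : w = t := by
    by_contra hwt
    have hws : w ≠ s := by rintro rfl; rw [map_sub, Pi.sub_apply] at hw; omega
    rw [map_sub, Pi.sub_apply, hcons w hws hwt] at hw
    omega
  exact ⟨p, hp, hdivp⟩

end Divergence

namespace ChainFlow

inductive Node (P : Type*)
  | source
  | sink
  | enter (x : P)
  | exit (x : P)
  deriving DecidableEq, Fintype

open Node

variable {P : Type*}

section Path

variable [DecidableEq P]

/-- The flow of one unit along `u → enter x₁ → exit x₁ → ⋯ → exit xₙ → sink`. -/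
def pathFlow : Node P → List P → Node P × Node P → ℤ
  | u, [] => Pi.single (u, sink) 1
  | u, x :: l => Pi.single (u, enter x) 1 + Pi.single (enter x, exit x) 1 + pathFlow (exit x) l

lemma divergence_pathFlow [Fintype P] (u : Node P) (l : List P) :
    divergence (pathFlow u l) = Pi.single u 1 - Pi.single sink 1 := by
  induction l generalizing u with
  | nil => exact divergence_single _ _ _
  | cons x l ih =>
    simp only [pathFlow, map_add, divergence_single, ih]
    abel

lemma pathFlow_nonneg (u : Node P) (l : List P) : 0 ≤ pathFlow u l := by
  induction l generalizing u with
  | nil => exact Pi.single_nonneg.2 zero_le_one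
  | cons x l ih =>
    exact add_nonneg (add_nonneg (Pi.single_nonneg.2 zero_le_one)
      (Pi.single_nonneg.2 zero_le_one)) (ih _)

lemma pathFlow_enter_exit (u : Node P) (l : List P) (x : P) :
    pathFlow u l (enter x, exit x) = l.count x := by
  induction l generalizing u with
  | nil => simp [pathFlow]
  | cons y l ih =>
    simp only [pathFlow, Pi.add_apply, ih, List.count_cons, Pi.single_apply, Prod.mk.injEq]
    by_cases hxy : x = y
    · simp [hxy]; ring
    · simp [hxy, Ne.symm hxy]

end Path

variable [PartialOrder P]

def IsArc : Node P → Node P → Prop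
  | source, enter _ => True
  | source, sink => True
  | enter x, exit y => x = y
  | exit x, enter y => x < y
  | exit _, sink => True
  | _, _ => False

/-- The cut below a set `X`: nodes of elements below `X`, with `exit x` only for `x` strictly
below, so that the arcs `enter x → exit x` with `x ∈ X` leave it. -/
def InCut (X : Finset P) : Node P → Prop
  | source => True
  | sink => False
  | enter y => ∃ x ∈ X, y ≤ x
  | exit y => ∃ x ∈ X, y < x

lemma InCut.of_isArc {X : Finset P} {u v : Node P} (huv : IsArc u v) (hv : InCut X v) :
    InCut X u := by
  cases u <;> cases v <;> simp only [IsArc, InCut] at huv hv ⊢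
  · obtain ⟨x, hx, hle⟩ := hv; exact ⟨x, hx, huv ▸ hle.le⟩
  · obtain ⟨x, hx, hle⟩ := hv; exact ⟨x, hx, huv.trans_le hle⟩

lemma isArc_of_pathFlow_ne_zero [DecidableEq P] {u : Node P} {l : List P}
    (hl : l.Pairwise (· < ·)) (hu : ∀ x ∈ l, IsArc u (enter x)) (hsink : IsArc u sink)
    {v w : Node P} (hvw : pathFlow u l (v, w) ≠ 0) : IsArc v w := by
  induction l generalizing u with
  | nil =>
    by_contra h
    exact hvw (Pi.single_eq_of_ne (by rintro ⟨rfl, rfl⟩; exact h hsink) _)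
  | cons x l ih =>
    rw [List.pairwise_cons] at hl
    by_cases h1 : (v, w) = (u, enter x)
    · cases h1; exact hu x List.mem_cons_self
    by_cases h2 : (v, w) = (enter x, exit x)
    · cases h2; rfl
    refine ih (u := exit x) hl.2 hl.1 trivial ?_
    simpa [pathFlow, Pi.single_eq_of_ne h1, Pi.single_eq_of_ne h2] using hvw

variable [Fintype P]

structure IsFlow (g : Node P × Node P → ℤ) : Prop where
  nonneg : ∀ e, 0 ≤ g e
  isArc : ∀ u v, g (u, v) ≠ 0 → IsArc u v
  le_one : ∀ x, g (enter x, exit x) ≤ 1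
  divergence_eq_zero : ∀ v, v ≠ source → v ≠ sink → divergence g v = 0

def covered (g : Node P × Node P → ℤ) : Finset P :=
  univ.filter fun x => g (enter x, exit x) = 1

lemma isFlow_zero : IsFlow (0 : Node P × Node P → ℤ) :=
  ⟨fun _ => le_rfl, fun _ _ h => absurd rfl h, fun _ => zero_le_one, fun _ _ _ => by simp⟩

variable {f g h : Node P × Node P → ℤ}

lemma IsFlow.of_mem_uIcc (hf : IsFlow f) (hg : IsFlow g) (hh : ∀ e, h e ∈ Set.uIcc (f e) (g e))
    (hdiv : ∀ v, v ≠ source → v ≠ sink → divergence h v = 0) : IsFlow h where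
  nonneg e := by
    have := Set.mem_uIcc.1 (hh e); have := hf.nonneg e; have := hg.nonneg e; omega
  isArc u v huv := by
    by_cases hfu : f (u, v) = 0
    · refine hg.isArc u v fun hgu => huv ?_
      have := Set.mem_uIcc.1 (hh (u, v)); omega
    · exact hf.isArc u v hfu
  le_one x := by
    have := Set.mem_uIcc.1 (hh (enter x, exit x)); have := hf.le_one x; have := hg.le_one x
    omega
  divergence_eq_zero := hdiv

lemma IsFlow.mem_covered (hg : IsFlow g) {x : P} :
    x ∈ covered g ↔ 0 < g (enter x, exit x) := by
  have := hg.nonneg (enter x, exit x); have := hg.le_one x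
  simp only [covered, mem_filter, mem_univ, true_and]; omega

lemma IsFlow.card_covered (hg : IsFlow g) :
    ((covered g).card : ℤ) = ∑ x, g (enter x, exit x) := by
  rw [covered, ← sum_boole]
  refine sum_congr rfl fun x _ => ?_
  have := hg.nonneg (enter x, exit x); have := hg.le_one x
  split_ifs <;> omega

theorem IsFlow.card_le_of_isAntichain (hg : IsFlow g) {X : Finset P}
    (hXg : X ⊆ covered g) (hX : IsAntichain (· ≤ ·) (X : Set P)) :
    (X.card : ℤ) ≤ divergence g source := by
  classical
  set U := univ.filter (InCut X)
  have hsource : source ∈ U := by simp [U, InCut]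
  have hsink : sink ∉ U := by simp [U, InCut]
  have hin : ∀ u ∈ U, ∀ w ∈ Uᶜ, g (w, u) = 0 := fun u hu w hw => by
    by_contra hwu
    simp only [U, mem_compl, mem_filter, mem_univ, true_and] at hu hw
    exact hw (InCut.of_isArc (hg.isArc w u hwu) hu)
  have hvalue : divergence g source = ∑ u ∈ U, ∑ w ∈ Uᶜ, g (u, w) := by
    rw [← sum_eq_single_of_mem source hsource fun u _ hu =>
      hg.divergence_eq_zero u hu (by rintro rfl; contradiction), sum_divergence]
    exact sum_congr rfl fun u hu => sum_congr rfl fun w hw => by rw [hin u hu w hw, sub_zero]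
  have hsub : X.image (fun x => (enter x, exit x)) ⊆ U ×ˢ Uᶜ := by
    simp only [subset_iff, mem_image, mem_product, mem_compl, mem_filter, mem_univ, true_and, U]
    rintro _ ⟨x, hx, rfl⟩
    exact ⟨⟨x, hx, le_rfl⟩, fun ⟨y, hy, hxy⟩ => hX hx hy hxy.ne hxy.le⟩
  calc (X.card : ℤ) = ∑ x ∈ X, g (enter x, exit x) := by
        rw [card_eq_sum_ones, Nat.cast_sum]
        refine sum_congr rfl fun x hx => ?_
        have := hXg hx; simp only [covered, mem_filter] at this; simp [this.2]
    _ = ∑ e ∈ X.image (fun x => (enter x, exit x)), g e :=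
        (sum_image fun x _ y _ h => by simpa using h).symm
    _ ≤ ∑ e ∈ U ×ˢ Uᶜ, g e := sum_le_sum_of_subset_of_nonneg hsub fun e _ _ => hg.nonneg e
    _ = divergence g source := by rw [sum_product, hvalue]

lemma IsFlow.covered_eq_empty (hg : IsFlow g) (h : divergence g source ≤ 0) : covered g = ∅ := by
  refine eq_empty_of_forall_notMem fun x hx => ?_
  have := hg.card_le_of_isAntichain (singleton_subset_iff.2 hx) (by simp)
  simp at this; omega

variable [DecidableEq P]

lemma IsFlow.isChain_covered (hg : IsFlow g) (h : divergence g source ≤ 1) :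
    IsChain (· ≤ ·) (covered g : Set P) := by
  intro x hx y hy hxy
  by_contra hc
  have := hg.card_le_of_isAntichain (X := {x, y}) (insert_subset hx (singleton_subset_iff.2 hy))
    (by
      rw [coe_pair]
      exact Set.pairwise_pair.2 fun _ => ⟨fun h => hc (Or.inl h), fun h => hc (Or.inr h)⟩)
  rw [card_pair hxy] at this; omega

lemma IsFlow.covered_add (hf : IsFlow f) (hg : IsFlow g) (hfg : IsFlow (f + g)) :
    covered (f + g) = covered f ∪ covered g ∧ Disjoint (covered f) (covered g) := by
  refine ⟨?_, disjoint_left.2 fun x hxf hxg => ?_⟩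
  · ext x
    simp only [mem_union, hf.mem_covered, hg.mem_covered, hfg.mem_covered, Pi.add_apply]
    have := hf.nonneg (enter x, exit x); have := hg.nonneg (enter x, exit x)
    omega
  · have := hfg.le_one x
    rw [hf.mem_covered] at hxf; rw [hg.mem_covered] at hxg
    simp only [Pi.add_apply] at this; omega

theorem IsFlow.exchange (hf : IsFlow f) (hg : IsFlow g)
    (hlt : divergence g source < divergence f source) :
    ∃ f' g', IsFlow f' ∧ IsFlow g' ∧ f' + g' = f + g ∧
      divergence f' source = divergence f source - 1 ∧
      divergence g' source = divergence g source + 1 := by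
  obtain ⟨p, hp, hdivp⟩ := exists_path_of_divergence_lt (t := sink)
    (fun v hs ht => by rw [hf.divergence_eq_zero v hs ht, hg.divergence_eq_zero v hs ht]) hlt
  have hp_zero : ∀ v, v ≠ source → v ≠ sink → divergence p v = 0 := fun v hs ht => by
    rw [hdivp, Pi.sub_apply, Pi.single_eq_of_ne hs, Pi.single_eq_of_ne ht, sub_zero]
  have hp_source : divergence p source = 1 := by
    rw [hdivp, Pi.sub_apply, Pi.single_eq_same, Pi.single_eq_of_ne (by simp)]; rfl
  refine ⟨f - p, g + p, hf.of_mem_uIcc hg (fun e => ?_) (fun v hs ht => ?_),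
    hf.of_mem_uIcc hg (fun e => ?_) (fun v hs ht => ?_), by abel, ?_, ?_⟩
  · have := Set.mem_uIcc.1 (hp e); exact Set.mem_uIcc.2 (by simp only [Pi.sub_apply]; omega)
  · rw [map_sub, Pi.sub_apply, hf.divergence_eq_zero v hs ht, hp_zero v hs ht, sub_zero]
  · have := Set.mem_uIcc.1 (hp e); exact Set.mem_uIcc.2 (by simp only [Pi.add_apply]; omega)
  · rw [map_add, Pi.add_apply, hg.divergence_eq_zero v hs ht, hp_zero v hs ht, add_zero]
  · rw [map_sub, Pi.sub_apply, hp_source]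
  · rw [map_add, Pi.add_apply, hp_source]

lemma IsFlow.exists_add_eq (hg : IsFlow g) {k : ℕ} (hk : divergence g source ≤ k + 1) :
    ∃ f₁ f₂, IsFlow f₁ ∧ IsFlow f₂ ∧ f₁ + f₂ = g ∧
      divergence f₁ source ≤ k ∧ divergence f₂ source ≤ 1 := by
  by_cases hpos : 0 < divergence g source
  · obtain ⟨f₁, f₂, hf₁, hf₂, hsum, hv₁, hv₂⟩ :=
      hg.exchange isFlow_zero (by rwa [map_zero, Pi.zero_apply])
    refine ⟨f₁, f₂, hf₁, hf₂, by rw [hsum, add_zero], by omega, ?_⟩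
    rw [hv₂, map_zero, Pi.zero_apply, zero_add]
  · exact ⟨g, 0, hg, isFlow_zero, add_zero g, by omega, by simp⟩

theorem IsFlow.exists_chains (hg : IsFlow g) {k : ℕ} (hk : divergence g source ≤ k) :
    ∃ C : Fin k → Finset P, (∀ i, IsChain (· ≤ ·) (C i : Set P)) ∧
      (Pairwise fun i j => Disjoint (C i) (C j)) ∧ univ.biUnion C = covered g := by
  induction k generalizing g with
  | zero => exact ⟨Fin.elim0, Fin.rec0, Fin.rec0, by simp [hg.covered_eq_empty hk]⟩
  | succ k ih =>
    obtain ⟨f₁, f₂, hf₁, hf₂, rfl, hv₁, hv₂⟩ := hg.exists_add_eq (by exact_mod_cast hk)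
    obtain ⟨C, hC, hD, hCf₁⟩ := ih hf₁ hv₁
    obtain ⟨hcov, hdisj⟩ := hf₁.covered_add hf₂ hg
    have hsub : ∀ i, C i ⊆ covered f₁ := fun i => hCf₁ ▸ subset_biUnion_of_mem C (mem_univ i)
    refine ⟨Fin.cons (covered f₂) C, Fin.cases (hf₂.isChain_covered hv₂) hC, ?_, ?_⟩
    · refine Fin.cases (Fin.cases (absurd rfl) fun j _ => ?_) fun i => Fin.cases (fun _ => ?_)
        fun j hij => hD fun h => hij (congrArg Fin.succ h)
      · exact (hdisj.mono_left (hsub j)).symm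
      · exact hdisj.mono_left (hsub i)
    · ext x
      simp [Fin.exists_fin_succ, hcov, ← hCf₁, or_comm]

theorem IsFlow.card_covered_le_Delta (hg : IsFlow g) {k : ℕ} (hk : divergence g source ≤ k) :
    (covered g).card ≤ Delta P k := by
  obtain ⟨C, hC, hD, hCg⟩ := hg.exists_chains hk
  exact hCg ▸ card_biUnion_le_Delta C hC hD

theorem exists_isFlow_of_chains {k : ℕ} (C : Fin k → Finset P)
    (hC : ∀ i, IsChain (· ≤ ·) (C i : Set P)) (hD : Pairwise fun i j => Disjoint (C i) (C j)) :
    ∃ g, IsFlow g ∧ divergence g source = k ∧ covered g = univ.biUnion C := by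
  choose L hL hLC using fun i => (hC i).exists_list_pairwise_lt
  have hcount : ∀ x, ∑ i, pathFlow source (L i) (enter x, exit x) =
      (univ.filter fun i => x ∈ C i).card := by
    intro x
    rw [← sum_boole]
    refine sum_congr rfl fun i _ => ?_
    rw [pathFlow_enter_exit, (hL i).nodup.count]
    simp [← hLC i]
  have hdiv : divergence (∑ i, pathFlow source (L i)) =
      k • (Pi.single source 1 - Pi.single sink 1) := by
    simp [map_sum, divergence_pathFlow, mul_sub]
  refine ⟨∑ i, pathFlow source (L i),
    ⟨fun e => ?_, fun v w h => ?_, fun x => ?_, fun v hs ht => ?_⟩, ?_, ?_⟩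
  · rw [Finset.sum_apply]; exact sum_nonneg fun i _ => pathFlow_nonneg _ _ e
  · rw [Finset.sum_apply] at h
    obtain ⟨i, -, hi⟩ := exists_ne_zero_of_sum_ne_zero h
    exact isArc_of_pathFlow_ne_zero (u := source) (hL i) (fun _ _ => trivial) trivial hi
  · rw [Finset.sum_apply, hcount]; exact_mod_cast card_filter_mem_le_one hD x
  · rw [hdiv]; simp [Pi.single_eq_of_ne hs, Pi.single_eq_of_ne ht]
  · rw [hdiv]; simp
  · ext x
    rw [covered, mem_filter, Finset.sum_apply, hcount, mem_biUnion]
    have := card_filter_mem_le_one hD x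
    have hpos : 0 < (univ.filter fun i => x ∈ C i).card ↔ ∃ i, x ∈ C i := by
      simp [card_pos, filter_nonempty_iff]
    simp only [mem_univ, true_and, ← hpos]
    omega

theorem exists_isFlow_card_covered_eq_Delta (k : ℕ) :
    ∃ g : Node P × Node P → ℤ, IsFlow g ∧ divergence g source = k ∧
      (covered g).card = Delta P k := by
  obtain ⟨C, hC, hD, hCk⟩ := exists_card_biUnion_eq_Delta P k
  obtain ⟨g, hg, hgk, hgC⟩ := exists_isFlow_of_chains C hC hD
  exact ⟨g, hg, hgk, hgC ▸ hCk⟩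

end ChainFlow

open ChainFlow

section

variable (P : Type*) [PartialOrder P] [Fintype P] [DecidableEq P]

theorem Delta_mono : Monotone (Delta P) := fun j k hjk => by
  obtain ⟨g, hg, hgj, hgΔ⟩ := exists_isFlow_card_covered_eq_Delta (P := P) j
  exact hgΔ ▸ hg.card_covered_le_Delta (by rw [hgj]; exact_mod_cast hjk)

theorem Delta_zero : Delta P 0 = 0 := by
  obtain ⟨g, hg, hg0, hgΔ⟩ := exists_isFlow_card_covered_eq_Delta (P := P) 0
  rw [← hgΔ, hg.covered_eq_empty hg0.le, card_empty]

theorem Delta_card : Delta P (Fintype.card P) = Fintype.card P := by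
  obtain ⟨C, -, -, hC⟩ := exists_card_biUnion_eq_Delta P (Fintype.card P)
  refine le_antisymm (hC ▸ card_le_univ _) ?_
  let e := (Fintype.equivFin P).symm
  have := card_biUnion_le_Delta (fun i => {e i}) (fun i => by simp)
    (fun i j hij => disjoint_singleton.2 (e.injective.ne hij))
  rwa [biUnion_singleton, image_univ_equiv, card_univ] at this

theorem Delta_add_Delta_le (k : ℕ) : Delta P (k + 2) + Delta P k ≤ 2 * Delta P (k + 1) := by
  obtain ⟨f, hf, hfk, hfΔ⟩ := exists_isFlow_card_covered_eq_Delta (P := P) (k + 2)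
  obtain ⟨g, hg, hgk, hgΔ⟩ := exists_isFlow_card_covered_eq_Delta (P := P) k
  obtain ⟨f', g', hf', hg', hsum, hf'k, hg'k⟩ :=
    hf.exchange hg (by rw [hfk, hgk]; push_cast; omega)
  have hcard : ((covered f').card : ℤ) + (covered g').card =
      (covered f).card + (covered g).card := by
    have := congrArg (fun h => ∑ x, h (Node.enter x, Node.exit x)) hsum
    simp only [Pi.add_apply, sum_add_distrib] at this
    rw [hf'.card_covered, hg'.card_covered, hf.card_covered, hg.card_covered, this]
  have h₁ := hf'.card_covered_le_Delta (k := k + 1) (by rw [hf'k, hfk]; push_cast; omega)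
  have h₂ := hg'.card_covered_le_Delta (k := k + 1) (by rw [hg'k, hgk]; push_cast; omega)
  omega

end

/-- Greene–Kleitman concavity: the sequence `λ_j := Δ_j(P) − Δ_{j−1}(P)` is weakly
decreasing and nonnegative, and `(λ₁, λ₂, …)` is a partition of `|P|`. -/
theorem stmt_17 (P : Type*) [PartialOrder P] [Fintype P] [DecidableEq P] :
    Monotone (Delta P) ∧
    (∀ j : ℕ, 1 ≤ j → Delta P (j + 1) - Delta P j ≤ Delta P j - Delta P (j - 1)) ∧
    (∑ j ∈ Finset.Icc 1 (Fintype.card P), (Delta P j - Delta P (j - 1))) =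
      Fintype.card P := by
  refine ⟨Delta_mono P, fun j hj => ?_, ?_⟩
  · obtain ⟨i, rfl⟩ := Nat.exists_eq_add_of_le' hj
    show Delta P (i + 2) - Delta P (i + 1) ≤ Delta P (i + 1) - Delta P i
    have := Delta_add_Delta_le P i
    have := Delta_mono P (by omega : i ≤ i + 1)
    have := Delta_mono P (by omega : i + 1 ≤ i + 2)
    omega
  · rw [(Delta_mono P).sum_Icc_tsub, Delta_card, Delta_zero, Nat.sub_zero]
end
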